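/- arXiv:2108.13567 — 2 statements merged into one kernel-verified Lean document; each statement's English description precedes it below -/
import Mathlib

section
/- For the Kotz-type generating function φ(t) = t^N exp(−r t^s) with r, s > 0 and N > −p/2, and s_p = p/2 − 1, s_q = 1 − q ∈ (0,1), the equation determining the stationary points of ρ̃_q reduces (after substituting u = t^s) to a quadratic in u whose roots give a, c = ((s + 2 s_q N + 2 s_p s_q ∓ √(s² + 4 s s_q N + 4 s s_p s_q))/(2 s_q r s))^{1/s}, and these are real and distinct whenever s² + 4 s s_q (N + s_p) > 0. -/
open Real

private lemma kotz_hasDerivAt (r s N : ℝ) (t : ℝ) (ht : 0 < t) :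
    HasDerivAt (fun x : ℝ => x ^ N * Real.exp (-r * x ^ s))
      ((N - r * s * t ^ s) / t * (t ^ N * Real.exp (-r * t ^ s))) t := by
  have h1 : HasDerivAt (fun x : ℝ => x ^ N) (N * t ^ (N - 1)) t :=
    Real.hasDerivAt_rpow_const (Or.inl ht.ne')
  have h2 : HasDerivAt (fun x : ℝ => -r * x ^ s) (-r * (s * t ^ (s - 1))) t :=
    (Real.hasDerivAt_rpow_const (Or.inl ht.ne')).const_mul (-r)
  have h4 := h1.mul h2.exp
  refine h4.congr_deriv ?_
  rw [Real.rpow_sub ht, Real.rpow_sub ht, Real.rpow_one]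
  field_simp
  ring

private lemma kotz_g_hasDerivAt (r s N : ℝ) (t : ℝ) (ht : 0 < t) :
    HasDerivAt (fun x : ℝ => (N - r * s * x ^ s) / x)
      (((-(r * s * (s * t ^ (s - 1)))) * t - (N - r * s * t ^ s) * 1) / t ^ 2) t := by
  have h3 : HasDerivAt (fun x : ℝ => N - r * s * x ^ s) (-(r * s * (s * t ^ (s - 1)))) t := by
    have := ((Real.hasDerivAt_rpow_const (p := s) (Or.inl ht.ne'))).const_mul (r * s)
    simpa using (this.const_sub N)
  exact h3.div (hasDerivAt_id t) ht.ne'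

private lemma kotz_deriv2 (r s N : ℝ) (t : ℝ) (ht : 0 < t) :
    deriv (deriv (fun x : ℝ => x ^ N * Real.exp (-r * x ^ s))) t =
      (((-(r * s * (s * t ^ (s - 1)))) * t - (N - r * s * t ^ s) * 1) / t ^ 2)
          * (t ^ N * Real.exp (-r * t ^ s))
        + (N - r * s * t ^ s) / t
          * ((N - r * s * t ^ s) / t * (t ^ N * Real.exp (-r * t ^ s))) := by
  have heq : deriv (fun x : ℝ => x ^ N * Real.exp (-r * x ^ s)) =ᶠ[nhds t]
      fun x => (N - r * s * x ^ s) / x * (x ^ N * Real.exp (-r * x ^ s)) :=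
    Filter.eventuallyEq_of_mem (Ioi_mem_nhds ht) (fun x hx => (kotz_hasDerivAt r s N x hx).deriv)
  rw [heq.deriv_eq]
  exact ((kotz_g_hasDerivAt r s N t ht).mul (kotz_hasDerivAt r s N t ht)).deriv

private lemma kotz_rpow_iff (t w s : ℝ) (ht : 0 < t) (hw : 0 ≤ w) (hs : s ≠ 0) :
    t ^ s = w ↔ t = w ^ (1 / s) := by
  constructor
  · intro h
    rw [← h, ← Real.rpow_mul ht.le, mul_one_div_cancel hs, Real.rpow_one]
  · intro h
    rw [h, ← Real.rpow_mul hw, one_div, inv_mul_cancel₀ hs, Real.rpow_one]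

/-- For the Kotz-type generating function `φ(t) = t^N exp(−r t^s)` with
`r, s > 0`, `N > −p/2`, the weight-function zero condition
`s_q s_p²/t + (2 s_q s_p + 1) φ'/φ − q t (φ'/φ)² + t φ''/φ = 0` has, whenever the
discriminant `s² + 4 s s_q N + 4 s s_p s_q` is positive, exactly the two real and
distinct solutions
`a, c = ((s + 2 s_q N + 2 s_p s_q ∓ √(s² + 4 s s_q N + 4 s s_p s_q))/(2 s_q r s))^{1/s}`. -/
theorem kotz_rejection_points (p q r s N : ℝ) (hp : 2 < p) (hq : q < 1)
    (hr : 0 < r) (hs : 0 < s) (hN : -(p / 2) < N)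
    (sp sq : ℝ) (hsp : sp = p / 2 - 1) (hsq : sq = 1 - q)
    (φ G : ℝ → ℝ)
    (hφ : ∀ t : ℝ, φ t = t ^ N * Real.exp (-r * t ^ s))
    (hG : ∀ t : ℝ, G t = sq * sp ^ 2 / t + (2 * sq * sp + 1) * (deriv φ t / φ t)
        - q * t * (deriv φ t / φ t) ^ 2 + t * (deriv (deriv φ) t / φ t))
    (hdisc : 0 < s ^ 2 + 4 * s * sq * N + 4 * s * sp * sq)
    (a c : ℝ)
    (ha : a = ((s + 2 * sq * N + 2 * sp * sq
        - Real.sqrt (s ^ 2 + 4 * s * sq * N + 4 * s * sp * sq)) / (2 * sq * r * s)) ^ (1 / s))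
    (hc : c = ((s + 2 * sq * N + 2 * sp * sq
        + Real.sqrt (s ^ 2 + 4 * s * sq * N + 4 * s * sp * sq)) / (2 * sq * r * s)) ^ (1 / s)) :
    a < c ∧ ∀ t : ℝ, 0 < t → (G t = 0 ↔ t = a ∨ t = c) := by
  have hφfun : φ = fun x : ℝ => x ^ N * Real.exp (-r * x ^ s) := funext hφ
  subst hφfun
  have hsq0 : 0 < sq := by rw [hsq]; linarith
  have hqe : q = 1 - sq := by rw [hsq]; ring
  set K : ℝ := s + 2 * sq * N + 2 * sp * sq with hK
  set D : ℝ := s ^ 2 + 4 * s * sq * N + 4 * s * sp * sq with hD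
  set d : ℝ := Real.sqrt D with hdd
  have hd2 : d ^ 2 = D := Real.sq_sqrt hdisc.le
  have hd0 : 0 < d := Real.sqrt_pos.2 hdisc
  have hKpos : 0 < K := by rw [hK]; nlinarith
  have hDK : D ≤ K ^ 2 := by rw [hK, hD]; nlinarith [sq_nonneg (sq * N + sp * sq)]
  have hdK : d ≤ K := by
    calc d ≤ Real.sqrt (K ^ 2) := Real.sqrt_le_sqrt hDK
    _ = K := by rw [Real.sqrt_sq hKpos.le]
  have hden : (0:ℝ) < 2 * sq * r * s := by positivity
  set u1 : ℝ := (K - d) / (2 * sq * r * s) with hu1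
  set u2 : ℝ := (K + d) / (2 * sq * r * s) with hu2
  have hu1nn : 0 ≤ u1 := div_nonneg (by linarith) hden.le
  have hu2nn : 0 ≤ u2 := div_nonneg (by linarith) hden.le
  have hu12 : u1 < u2 := by
    rw [hu1, hu2]
    apply div_lt_div_of_pos_right ?_ hden
    linarith
  constructor
  · rw [ha, hc]
    exact Real.rpow_lt_rpow hu1nn hu12 (by positivity)
  intro t ht
  have htne : t ≠ 0 := ht.ne'
  have hGt : G t = (sq * r ^ 2 * s ^ 2 * (t ^ s) ^ 2 - r * s * K * (t ^ s)
      + sq * (N + sp) ^ 2) / t := by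
    rw [hG t, (kotz_hasDerivAt r s N t ht).deriv, kotz_deriv2 r s N t ht,
      Real.rpow_sub ht, Real.rpow_one, hK, hqe]
    have h1 : t ^ N ≠ 0 := (Real.rpow_pos_of_pos ht N).ne'
    have h2 : Real.exp (-r * t ^ s) ≠ 0 := (Real.exp_pos _).ne'
    field_simp
    ring
  have hquad : ∀ u : ℝ, 4 * sq * (sq * r ^ 2 * s ^ 2 * u ^ 2 - r * s * K * u
      + sq * (N + sp) ^ 2) = (2 * sq * r * s * u - (K - d)) * (2 * sq * r * s * u - (K + d)) := by
    intro u
    rw [hK]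
    linear_combination hd2
  have h4 : (4:ℝ) * sq ≠ 0 := by positivity
  have key : G t = 0 ↔ t ^ s = u1 ∨ t ^ s = u2 := by
    rw [hGt, div_eq_zero_iff]
    constructor
    · rintro (h | h)
      · have hq0 := hquad (t ^ s)
        rw [h, mul_zero] at hq0
        rcases mul_eq_zero.1 hq0.symm with h1 | h1
        · left; rw [hu1, eq_div_iff hden.ne']; linarith
        · right; rw [hu2, eq_div_iff hden.ne']; linarith
      · exact absurd h htne
    · rintro (h | h) <;> left
      · have h1 : 2 * sq * r * s * (t ^ s) - (K - d) = 0 := by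
          rw [h, hu1]
          field_simp
          ring
        have hq0 := hquad (t ^ s)
        rw [h1, zero_mul] at hq0
        exact (mul_eq_zero.1 hq0).resolve_left h4
      · have h1 : 2 * sq * r * s * (t ^ s) - (K + d) = 0 := by
          rw [h, hu2]
          field_simp
          ring
        have hq0 := hquad (t ^ s)
        rw [h1, mul_zero] at hq0
        exact (mul_eq_zero.1 hq0).resolve_left h4
  rw [key, kotz_rpow_iff t u1 s ht hu1nn hs.ne', kotz_rpow_iff t u2 s ht hu2nn hs.ne',
    ← ha, ← hc]
end

section
/- For the Pearson type II generating function φ(t) = (1−t)^m on [0,1] with m > 0, the rejection points a, c = (2 s_q s_p² + m(2 s_q s_p + 1) ∓ √(m²(4 s_q s_p + 1) + 4 m s_q s_p²)) / (2(s_q s_p² + m(2 s_q s_p + m s_q))) both lie in the open interval (0,1) when q < 1 − 1/m (equivalently s_q > 1/m). -/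
open Real

/-- For the Pearson type II generating function `φ(t) = (1−t)^m` with `m > 0`,
the rejection points
`a, c = (2 s_q s_p² + m(2 s_q s_p + 1) ∓ √(m²(4 s_q s_p + 1) + 4 m s_q s_p²))
        / (2(s_q s_p² + m(2 s_q s_p + m s_q)))`
both lie in `(0,1)` when `q < 1 − 1/m`, and `a < c`. -/
theorem pearsonII_rejection_points (p q m : ℝ) (hp : 2 < p) (hm : 0 < m)
    (hq : q < 1 - 1 / m)
    (sp sq : ℝ) (hsp : sp = p / 2 - 1) (hsq : sq = 1 - q)
    (a c : ℝ)
    (ha : a = (2 * sq * sp ^ 2 + m * (2 * sq * sp + 1)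
        - Real.sqrt (m ^ 2 * (4 * sq * sp + 1) + 4 * m * sq * sp ^ 2))
        / (2 * (sq * sp ^ 2 + m * (2 * sq * sp + m * sq))))
    (hc : c = (2 * sq * sp ^ 2 + m * (2 * sq * sp + 1)
        + Real.sqrt (m ^ 2 * (4 * sq * sp + 1) + 4 * m * sq * sp ^ 2))
        / (2 * (sq * sp ^ 2 + m * (2 * sq * sp + m * sq)))) :
    0 < a ∧ a < c ∧ c < 1 := by
  have hsp0 : 0 < sp := by rw [hsp]; linarith
  have hmsq : 1 < m * sq := by
    have h1 : 1 / m < sq := by rw [hsq]; linarith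
    calc 1 = m * (1/m) := by field_simp
    _ < m * sq := by exact mul_lt_mul_of_pos_left h1 hm
  have hsq0 : 0 < sq := by nlinarith
  set B := 2 * sq * sp ^ 2 + m * (2 * sq * sp + 1) with hB
  set D := m ^ 2 * (4 * sq * sp + 1) + 4 * m * sq * sp ^ 2 with hD
  set K := sq * sp ^ 2 + m * (2 * sq * sp + m * sq) with hK
  have hD0 : 0 < D := by positivity
  have hK0 : 0 < K := by positivity
  have hB0 : 0 < B := by positivity
  set s := Real.sqrt D with hs
  have hs0 : 0 < s := Real.sqrt_pos.mpr hD0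
  have hssq : s ^ 2 = D := Real.sq_sqrt hD0.le
  clear_value B D K s
  -- B^2 - D = (2*sq*sp*(sp+m))^2 > 0
  have key1 : 0 < (2 * sq * sp * (sp + m)) ^ 2 := by positivity
  have hid1 : B ^ 2 - D = (2 * sq * sp * (sp + m)) ^ 2 := by rw [hB, hD]; ring
  have h1 : D < B ^ 2 := by linarith
  have hsB : s < B := by nlinarith
  -- A - B = m*(2*sq*sp + 2*m*sq - 1) > 0
  have hAB : 0 < 2 * K - B := by nlinarith
  have key2 : 0 < 4 * m * sq * (m * sq - 1) * (sp + m) ^ 2 := by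
    have : 0 < m * sq - 1 := by linarith
    positivity
  have hid2 : (2 * K - B) ^ 2 - D = 4 * m * sq * (m * sq - 1) * (sp + m) ^ 2 := by
    rw [hK, hB, hD]; ring
  have h2 : D < (2 * K - B) ^ 2 := by linarith
  have hsAB : s < 2 * K - B := by nlinarith
  refine ⟨?_, ?_, ?_⟩
  · rw [ha]
    apply div_pos (by linarith) (by linarith)
  · rw [ha, hc]
    have h2K : (0:ℝ) < 2 * K := by linarith
    have hnum : B - s < B + s := by linarith
    exact div_lt_div_of_pos_right hnum h2K
  · rw [hc, div_lt_one (by linarith)]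
    linarith
end
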